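/- For every (z,w) ∈ ℂ^p × ℂ^q with z ≠ 0 and w ≠ 0, the kernel of the (real) Fréchet derivative of ψ at (z,w) is exactly the one-dimensional real line spanned by the vector (z, −w) ∈ ℂ^p × ℂ^q. -/

import Mathlib

/-- The weighted square norm `|z|²_c = ∑ c_j |z_j|²` on `ℂ^n`. -/
noncomputable def wnorm {n : ℕ} (c : Fin n → ℕ) (z : Fin n → ℂ) : ℝ :=
  ∑ j, (c j : ℝ) * ‖z j‖ ^ 2

open Classical in
/-- The blow-down map
`ψ(z,w) = ((|w|²_b/|z|²_a)^{1/4}·z, (|z|²_a/|w|²_b)^{1/4}·w)` for `z ≠ 0` and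
`w ≠ 0`, and `ψ(z,w) = (0,0)` if `z = 0` or `w = 0`. -/
noncomputable def psi {p q : ℕ} (a : Fin p → ℕ) (b : Fin q → ℕ)
    (x : (Fin p → ℂ) × (Fin q → ℂ)) : (Fin p → ℂ) × (Fin q → ℂ) :=
  if x.1 ≠ 0 ∧ x.2 ≠ 0 then
    (((wnorm b x.2 / wnorm a x.1) ^ ((1 : ℝ) / 4)) • x.1,
     ((wnorm a x.1 / wnorm b x.2) ^ ((1 : ℝ) / 4)) • x.2)
  else (0, 0)

noncomputable def dwnorm {n : ℕ} (c : Fin n → ℕ) (z : Fin n → ℂ) : (Fin n → ℂ) →L[ℝ] ℝ :=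
  ∑ j, (c j : ℝ) •
    ((2 * (z j).re) • (Complex.reCLM.comp (ContinuousLinearMap.proj j : (Fin n → ℂ) →L[ℝ] ℂ))
      + (2 * (z j).im) • (Complex.imCLM.comp (ContinuousLinearMap.proj j : (Fin n → ℂ) →L[ℝ] ℂ)))

lemma wnorm_eq {n : ℕ} (c : Fin n → ℕ) (z : Fin n → ℂ) :
    wnorm c z = ∑ j, (c j : ℝ) * ((z j).re ^ 2 + (z j).im ^ 2) := by
  unfold wnorm
  refine Finset.sum_congr rfl fun j _ => ?_
  rw [Complex.sq_norm, Complex.normSq_apply]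
  ring

lemma wnorm_nonneg {n : ℕ} (c : Fin n → ℕ) (z : Fin n → ℂ) : 0 ≤ wnorm c z := by
  unfold wnorm; positivity

lemma wnorm_pos {n : ℕ} {c : Fin n → ℕ} (hc : ∀ j, 0 < c j) {z : Fin n → ℂ} (hz : z ≠ 0) :
    0 < wnorm c z := by
  unfold wnorm
  obtain ⟨j, hj⟩ := Function.ne_iff.mp hz
  have hnn : ∀ i ∈ Finset.univ, 0 ≤ (c i : ℝ) * ‖z i‖ ^ 2 := fun i _ => by positivity
  refine Finset.sum_pos' hnn ⟨j, Finset.mem_univ j, ?_⟩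
  have h1 : (1 : ℝ) ≤ (c j : ℝ) := by exact_mod_cast hc j
  have h2 : 0 < ‖z j‖ ^ 2 := by
    have : 0 < ‖z j‖ := norm_pos_iff.mpr (by simpa using hj)
    positivity
  nlinarith

lemma hasFDerivAt_wnorm {n : ℕ} (c : Fin n → ℕ) (z : Fin n → ℂ) :
    HasFDerivAt (wnorm c) (dwnorm c z) z := by
  rw [show wnorm c = fun y => ∑ j, (c j : ℝ) * ((y j).re ^ 2 + (y j).im ^ 2) from
    funext (wnorm_eq c)]
  apply HasFDerivAt.fun_sum
  intro j _
  have hre : HasFDerivAt (fun y : Fin n → ℂ => (y j).re)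
      (Complex.reCLM.comp (ContinuousLinearMap.proj j : (Fin n → ℂ) →L[ℝ] ℂ)) z :=
    ((Complex.reCLM.comp (ContinuousLinearMap.proj j : (Fin n → ℂ) →L[ℝ] ℂ)).hasFDerivAt :)
  have him : HasFDerivAt (fun y : Fin n → ℂ => (y j).im)
      (Complex.imCLM.comp (ContinuousLinearMap.proj j : (Fin n → ℂ) →L[ℝ] ℂ)) z :=
    ((Complex.imCLM.comp (ContinuousLinearMap.proj j : (Fin n → ℂ) →L[ℝ] ℂ)).hasFDerivAt :)
  have h1 := ((hre.mul hre).add (him.mul him)).const_mul (c j : ℝ)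
  simp only [pow_two]
  refine h1.congr_fderiv ?_
  module

lemma dwnorm_self {n : ℕ} (c : Fin n → ℕ) (z : Fin n → ℂ) :
    dwnorm c z z = 2 * wnorm c z := by
  simp only [dwnorm, ContinuousLinearMap.sum_apply, ContinuousLinearMap.smul_apply,
    ContinuousLinearMap.add_apply, ContinuousLinearMap.coe_comp', Function.comp_apply,
    ContinuousLinearMap.proj_apply, Complex.reCLM_apply, Complex.imCLM_apply, smul_eq_mul]
  rw [wnorm_eq, Finset.mul_sum]
  refine Finset.sum_congr rfl fun j _ => ?_
  ring

lemma aux_smul {E : Type*} [AddCommGroup E] [Module ℝ E] {r s : ℝ} (hr : r ≠ 0) {u z : E}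
    (h : r • u + s • z = 0) : u = (-s / r) • z := by
  have h2 : r • u = (-s) • z := by
    rw [neg_smul]
    linear_combination (norm := module) h
  calc u = r⁻¹ • (r • u) := by rw [smul_smul, inv_mul_cancel₀ hr, one_smul]
    _ = r⁻¹ • ((-s) • z) := by rw [h2]
    _ = (-s / r) • z := by rw [smul_smul]; congr 1; field_simp

lemma mem_span_pair {E F : Type*} [AddCommGroup E] [Module ℝ E] [AddCommGroup F] [Module ℝ F]
    {u : E × F} {z : E} {w : F} {t1 t2 : ℝ} (h1 : u.1 = t1 • z) (h2 : u.2 = t2 • w)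
    (h : t2 = -t1) : u ∈ Submodule.span ℝ {((z, -w) : E × F)} := by
  refine Submodule.mem_span_singleton.mpr ⟨t1, ?_⟩
  rw [Prod.ext_iff]
  constructor
  · simpa using h1.symm
  · show t1 • (-w) = u.2
    rw [h2, h, neg_smul, smul_neg]

/-- For `z ≠ 0` and `w ≠ 0` the kernel of the real Fréchet derivative of `ψ` at
`(z,w)` is exactly the real line spanned by `(z, −w)`. -/
theorem stmt_15 {p q : ℕ} (hp : 1 ≤ p) (hq : 1 ≤ q)
    (a : Fin p → ℕ) (b : Fin q → ℕ) (ha : ∀ j, 0 < a j) (hb : ∀ j, 0 < b j)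
    (x : (Fin p → ℂ) × (Fin q → ℂ)) (hz : x.1 ≠ 0) (hw : x.2 ≠ 0) :
    LinearMap.ker ((fderiv ℝ (psi a b) x : (Fin p → ℂ) × (Fin q → ℂ) →ₗ[ℝ] (Fin p → ℂ) × (Fin q → ℂ)))
      = Submodule.span ℝ {((x.1, -x.2) : (Fin p → ℂ) × (Fin q → ℂ))} := by
  have hA : 0 < wnorm a x.1 := wnorm_pos ha hz
  have hB : 0 < wnorm b x.2 := wnorm_pos hb hw
  -- derivatives of the weighted norms as functions of the pair
  have hA' : HasFDerivAt (fun y : (Fin p → ℂ) × (Fin q → ℂ) => wnorm a y.1)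
      ((dwnorm a x.1).comp (ContinuousLinearMap.fst ℝ (Fin p → ℂ) (Fin q → ℂ))) x :=
    (hasFDerivAt_wnorm a x.1).comp x hasFDerivAt_fst
  have hB' : HasFDerivAt (fun y : (Fin p → ℂ) × (Fin q → ℂ) => wnorm b y.2)
      ((dwnorm b x.2).comp (ContinuousLinearMap.snd ℝ (Fin p → ℂ) (Fin q → ℂ))) x :=
    (hasFDerivAt_wnorm b x.2).comp x hasFDerivAt_snd
  have hBr := hB'.rpow_const (p := (1:ℝ)/4) (Or.inl hB.ne')
  have hAr := hA'.rpow_const (p := -((1:ℝ)/4)) (Or.inl hA.ne')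
  have hAr2 := hA'.rpow_const (p := (1:ℝ)/4) (Or.inl hA.ne')
  have hBr2 := hB'.rpow_const (p := -((1:ℝ)/4)) (Or.inl hB.ne')
  have h1 := (hBr.mul hAr).smul (hasFDerivAt_fst (p := x))
  have h2 := (hAr2.mul hBr2).smul (hasFDerivAt_snd (p := x))
  have hG := h1.prodMk h2
  -- psi agrees with the smooth formula near x
  have hUopen : IsOpen {y : (Fin p → ℂ) × (Fin q → ℂ) | y.1 ≠ 0 ∧ y.2 ≠ 0} := by
    have o1 : IsOpen {y : (Fin p → ℂ) × (Fin q → ℂ) | y.1 ≠ 0} :=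
      isOpen_compl_singleton.preimage continuous_fst
    have o2 : IsOpen {y : (Fin p → ℂ) × (Fin q → ℂ) | y.2 ≠ 0} :=
      isOpen_compl_singleton.preimage continuous_snd
    exact o1.inter o2
  have hev : psi a b =ᶠ[nhds x] fun y =>
      ((wnorm b y.2 ^ ((1:ℝ)/4) * wnorm a y.1 ^ (-((1:ℝ)/4))) • y.1,
       (wnorm a y.1 ^ ((1:ℝ)/4) * wnorm b y.2 ^ (-((1:ℝ)/4))) • y.2) := by
    filter_upwards [hUopen.mem_nhds ⟨hz, hw⟩] with y hy
    have hAy : 0 < wnorm a y.1 := wnorm_pos ha hy.1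
    have hBy : 0 < wnorm b y.2 := wnorm_pos hb hy.2
    simp only [psi, if_pos hy]
    rw [Real.div_rpow (wnorm_nonneg b y.2) hAy.le, Real.div_rpow (wnorm_nonneg a y.1) hBy.le,
      Real.rpow_neg hAy.le, Real.rpow_neg hBy.le]
    simp [div_eq_mul_inv]
  have hpsi := hG.congr_of_eventuallyEq hev
  rw [hpsi.fderiv]
  -- abbreviations
  set A := wnorm a x.1 with hAdef
  set B := wnorm b x.2 with hBdef
  set α := A ^ ((1:ℝ)/4) with hαdef
  set β := B ^ ((1:ℝ)/4) with hβdef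
  have hα : 0 < α := Real.rpow_pos_of_pos hA _
  have hβ : 0 < β := Real.rpow_pos_of_pos hB _
  have eα : A ^ (-((1:ℝ)/4)) = α⁻¹ := by rw [Real.rpow_neg hA.le]
  have eβ : B ^ (-((1:ℝ)/4)) = β⁻¹ := by rw [Real.rpow_neg hB.le]
  have eα2 : A ^ (-((1:ℝ)/4) - 1) = α⁻¹ / A := by
    rw [Real.rpow_sub hA, Real.rpow_one, Real.rpow_neg hA.le]
  have eβ2 : B ^ (-((1:ℝ)/4) - 1) = β⁻¹ / B := by
    rw [Real.rpow_sub hB, Real.rpow_one, Real.rpow_neg hB.le]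
  have eα3 : A ^ ((1:ℝ)/4 - 1) = α / A := by rw [Real.rpow_sub hA, Real.rpow_one]
  have eβ3 : B ^ ((1:ℝ)/4 - 1) = β / B := by rw [Real.rpow_sub hB, Real.rpow_one]
  apply le_antisymm
  · intro u hu
    rw [LinearMap.mem_ker] at hu
    simp only [ContinuousLinearMap.coe_prod, ContinuousLinearMap.prod_apply, LinearMap.prod_apply, ContinuousLinearMap.coe_coe, Function.prod_apply, Pi.mul_apply,
      ContinuousLinearMap.add_apply, ContinuousLinearMap.coe_smul', Pi.smul_apply,
      ContinuousLinearMap.smulRight_apply, ContinuousLinearMap.coe_comp', Function.comp_apply,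
      ContinuousLinearMap.coe_fst', ContinuousLinearMap.coe_snd',
      ContinuousLinearMap.smul_apply, Prod.mk_eq_zero, smul_eq_mul] at hu
    obtain ⟨k1, k2⟩ := hu
    simp only [eα, eβ, eα2, eβ2, eα3, eβ3, ← hAdef, ← hBdef, ← hαdef, ← hβdef] at k1 k2
    have hu1 := aux_smul (show (β * α⁻¹ : ℝ) ≠ 0 by positivity) k1
    have hu2 := aux_smul (show (α * β⁻¹ : ℝ) ≠ 0 by positivity) k2
    have hα' : α ≠ 0 := ne_of_gt hα
    have hβ' : β ≠ 0 := ne_of_gt hβ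
    have hA' : A ≠ 0 := ne_of_gt hA
    have hB' : B ≠ 0 := ne_of_gt hB
    refine mem_span_pair hu1 hu2 ?_
    field_simp
    ring
  · rw [Submodule.span_le, Set.singleton_subset_iff, SetLike.mem_coe, LinearMap.mem_ker]
    simp only [ContinuousLinearMap.coe_prod, ContinuousLinearMap.prod_apply, LinearMap.prod_apply, ContinuousLinearMap.coe_coe, Function.prod_apply, Pi.mul_apply,
      ContinuousLinearMap.add_apply, ContinuousLinearMap.coe_smul', Pi.smul_apply,
      ContinuousLinearMap.smulRight_apply, ContinuousLinearMap.coe_comp', Function.comp_apply,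
      ContinuousLinearMap.coe_fst', ContinuousLinearMap.coe_snd',
      ContinuousLinearMap.smul_apply, Prod.mk_eq_zero, smul_eq_mul, map_neg, dwnorm_self]
    simp only [eα, eβ, eα2, eβ2, eα3, eβ3, ← hAdef, ← hBdef]
    have hα' : α ≠ 0 := ne_of_gt hα
    have hβ' : β ≠ 0 := ne_of_gt hβ
    have hA' : A ≠ 0 := ne_of_gt hA
    have hB' : B ≠ 0 := ne_of_gt hB
    constructor
    · rw [← add_smul]
      convert zero_smul ℝ x.1
      field_simp
      ring
    · rw [smul_neg, ← neg_smul, ← add_smul]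
      convert zero_smul ℝ x.2
      field_simp
      ring
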